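/- arXiv:1710.05482 — 5 statements merged into one kernel-verified Lean document; each statement's English description precedes it below -/
import Mathlib

section
/- Let $\varepsilon, \mu, c, \kappa > 0$ with $\kappa > 0$, and for $\lambda > 0$ define $F(t) = \varepsilon e^{-\mu t} - c\lambda(e^{-\lambda t} - e^{\lambda t}) - \lambda^2(e^{-\lambda t} + e^{\lambda t}) + \kappa(e^{-\lambda t} + e^{\lambda t} - 2)$ for $t \geq 0$. If $0 < \lambda < \min\{\sqrt{\varepsilon/2}, \sqrt{\varepsilon\mu/(2c)}, \sqrt{\kappa}\}$, then $F(0) > 0$, $F'(0) < 0$, and $F''(t) > 0$ for all $t \geq 0$. -/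
/-!
In terms of hyperbolic functions, `F t = ε e^{-μt} + 2cλ sinh λt + 2(κ - λ²) cosh λt - 2κ`.
Hence `F 0 = ε - 2λ²` and `F' 0 = 2cλ² - εμ`, while every coefficient of
`F'' t = εμ² e^{-μt} + 2cλ³ sinh λt + 2(κ - λ²)λ² cosh λt` is nonnegative for `κ ≥ λ²`.
-/

open Real

/-- `F` and its derivatives all lie in this family: differentiation maps `(a, b, d, e)` to
`(-a μ, d l, b l, 0)`. -/
noncomputable def expSinhCosh (μ l a b d e t : ℝ) : ℝ :=
  a * exp (-(μ * t)) + b * sinh (l * t) + d * cosh (l * t) + e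

section

variable (μ l a b d e : ℝ)

theorem hasDerivAt_expSinhCosh (x : ℝ) :
    HasDerivAt (expSinhCosh μ l a b d e) (expSinhCosh μ l (-(a * μ)) (d * l) (b * l) 0 x) x := by
  have hlin (k : ℝ) : HasDerivAt (fun t => k * t) k x := by
    simpa using (hasDerivAt_id x).const_mul k
  have hneg : HasDerivAt (fun t => -(μ * t)) (-μ) x := (hlin μ).neg
  have hexp := hneg.exp.const_mul a
  have hsinh := (hlin l).sinh.const_mul b
  have hcosh := (hlin l).cosh.const_mul d
  exact (((hexp.add hsinh).add hcosh).add_const e).congr_deriv (by rw [expSinhCosh]; ring)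

theorem deriv_expSinhCosh :
    deriv (expSinhCosh μ l a b d e) = expSinhCosh μ l (-(a * μ)) (d * l) (b * l) 0 :=
  funext fun x => (hasDerivAt_expSinhCosh μ l a b d e x).deriv

theorem expSinhCosh_zero : expSinhCosh μ l a b d e 0 = a + d + e := by
  simp [expSinhCosh]

variable {μ l a b d e}

theorem expSinhCosh_pos (ha : 0 < a) (hb : 0 ≤ b) (hd : 0 ≤ d) (he : 0 ≤ e) (hl : 0 ≤ l)
    {t : ℝ} (ht : 0 ≤ t) : 0 < expSinhCosh μ l a b d e t := by
  have hsinh : 0 ≤ sinh (l * t) := sinh_nonneg_iff.mpr (mul_nonneg hl ht)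
  have hcosh := cosh_pos (l * t)
  unfold expSinhCosh
  positivity

end

theorem stmt3_general (ε μ c κ l : ℝ) (hε : 0 < ε) (hμ : 0 < μ) (hc : 0 < c)
    (hl : 0 < l)
    (hl' : l < min (Real.sqrt (ε / 2)) (min (Real.sqrt (ε * μ / (2 * c))) (Real.sqrt κ)))
    (F : ℝ → ℝ)
    (hF : ∀ t : ℝ, F t =
      ε * Real.exp (-(μ * t)) - c * l * (Real.exp (-(l * t)) - Real.exp (l * t))
        - l ^ 2 * (Real.exp (-(l * t)) + Real.exp (l * t))
        + κ * (Real.exp (-(l * t)) + Real.exp (l * t) - 2)) :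
    F 0 > 0 ∧ deriv F 0 < 0 ∧ ∀ t ≥ (0:ℝ), deriv (deriv F) t > 0 := by
  rw [lt_min_iff, lt_min_iff, lt_sqrt hl.le, lt_sqrt hl.le, lt_sqrt hl.le] at hl'
  obtain ⟨hε', hcμ, hκ⟩ := hl'
  rw [lt_div_iff₀ (by positivity)] at hcμ
  have hF_eq : F = expSinhCosh μ l ε (2 * c * l) (2 * (κ - l ^ 2)) (-(2 * κ)) := by
    funext t
    rw [hF, expSinhCosh, sinh_eq, cosh_eq]
    ring
  simp only [hF_eq, deriv_expSinhCosh, expSinhCosh_zero]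
  refine ⟨by linarith, by nlinarith, fun t ht => expSinhCosh_pos ?_ ?_ ?_ le_rfl hl.le ht⟩
  · have := mul_pos (mul_pos hε hμ) hμ
    linarith
  all_goals
    have := sub_pos.mpr hκ
    positivity

theorem stmt3 (ε μ c κ l : ℝ) (hε : 0 < ε) (hμ : 0 < μ) (hc : 0 < c) (hκ : 0 < κ)
    (hl : 0 < l)
    (hl' : l < min (Real.sqrt (ε / 2)) (min (Real.sqrt (ε * μ / (2 * c))) (Real.sqrt κ)))
    (F : ℝ → ℝ)
    (hF : ∀ t : ℝ, F t =
      ε * Real.exp (-(μ * t)) - c * l * (Real.exp (-(l * t)) - Real.exp (l * t))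
        - l ^ 2 * (Real.exp (-(l * t)) + Real.exp (l * t))
        + κ * (Real.exp (-(l * t)) + Real.exp (l * t) - 2)) :
    F 0 > 0 ∧ deriv F 0 < 0 ∧ ∀ t ≥ (0:ℝ), deriv (deriv F) t > 0 :=
  stmt3_general ε μ c κ l hε hμ hc hl hl' F hF
end

section
/- Let $\varepsilon, \mu, c, \kappa > 0$ and for $\lambda > 0$ define $F_\lambda(t) = \varepsilon e^{-\mu t} - c\lambda(e^{-\lambda t} - e^{\lambda t}) - \lambda^2(e^{-\lambda t} + e^{\lambda t}) + \kappa(e^{-\lambda t} + e^{\lambda t} - 2)$ for $t \geq 0$. Then there exists $\lambda_0 > 0$ such that for all $\lambda \in (0, \lambda_0)$, $F_\lambda(t) > 0$ for all $t \geq 0$. -/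
open Real

theorem stmt4 (ε μ c κ : ℝ) (hε : 0 < ε) (hμ : 0 < μ) (hc : 0 < c) (hκ : 0 < κ)
    (F : ℝ → ℝ → ℝ)
    (hF : ∀ l t : ℝ, F l t =
      ε * Real.exp (-(μ * t)) - c * l * (Real.exp (-(l * t)) - Real.exp (l * t))
        - l ^ 2 * (Real.exp (-(l * t)) + Real.exp (l * t))
        + κ * (Real.exp (-(l * t)) + Real.exp (l * t) - 2)) :
    ∃ lam0 : ℝ, 0 < lam0 ∧ ∀ l : ℝ, 0 < l → l < lam0 → ∀ t ≥ (0:ℝ), F l t > 0 := by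
  refine ⟨min (Real.sqrt κ) (Real.sqrt (ε * Real.exp (-(μ/c)) / 2)), ?_, ?_⟩
  · apply lt_min <;> apply Real.sqrt_pos.mpr
    · exact hκ
    · positivity
  · intro l hl hls t ht
    rw [hF]
    have hx : 0 ≤ l * t := mul_nonneg hl.le ht
    have h1 : Real.exp (l*t) + Real.exp (-(l*t)) ≥ 2 := by
      have := Real.one_le_cosh (l*t)
      rw [Real.cosh_eq] at this; linarith
    have h2 : Real.exp (l*t) - Real.exp (-(l*t)) ≥ 2*(l*t) := by
      rcases eq_or_lt_of_le hx with h | h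
      · rw [← h]; simp
      · have := (Real.self_lt_sinh_iff (x := l*t)).mpr h
        rw [Real.sinh_eq] at this; linarith
    have hlk : l ^ 2 < κ := by
      have h := lt_of_lt_of_le hls (min_le_left _ _)
      have := (Real.lt_sqrt hl.le).mp h
      linarith
    have hle : 2 * l ^ 2 < ε * Real.exp (-(μ/c)) := by
      have h := lt_of_lt_of_le hls (min_le_right _ _)
      have := (Real.lt_sqrt hl.le).mp h
      linarith
    rcases le_or_gt t (1/c) with hct | hct
    · have hmono : Real.exp (-(μ/c)) ≤ Real.exp (-(μ*t)) := by
        apply Real.exp_le_exp.mpr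
        have h5 : μ * t ≤ μ * (1/c) := mul_le_mul_of_nonneg_left hct hμ.le
        have h6 : μ * (1/c) = μ / c := by ring
        linarith
      nlinarith [mul_nonneg (mul_nonneg hc.le hl.le) (by linarith : (0:ℝ) ≤ Real.exp (l*t) - Real.exp (-(l*t))), mul_le_mul_of_nonneg_left hmono hε.le, mul_le_mul_of_nonneg_left h1 (by linarith : (0:ℝ) ≤ κ - l^2)]
    · have hsinh : c * l * (Real.exp (l*t) - Real.exp (-(l*t))) ≥ 2 * l ^ 2 := by
        have h3 : c * l * (Real.exp (l*t) - Real.exp (-(l*t))) ≥ c * l * (2*(l*t)) := by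
          apply mul_le_mul_of_nonneg_left h2 (by positivity)
        have h4 : c * t ≥ 1 := by
          have := (div_lt_iff₀ hc).mp hct
          nlinarith
        nlinarith
      nlinarith [Real.exp_pos (-(μ*t)), mul_le_mul_of_nonneg_left h1 (by linarith : (0:ℝ) ≤ κ - l^2)]
end

section
/- Let $\varepsilon, \mu, c, \kappa > 0$, and suppose for each small $\lambda > 0$ there is $t_\lambda \geq 0$ satisfying $\varepsilon\mu e^{-\mu t_\lambda} = \lambda^2 c\,(e^{\lambda t_\lambda} + e^{-\lambda t_\lambda}) + (\kappa\lambda - \lambda^3)(e^{\lambda t_\lambda} - e^{-\lambda t_\lambda})$. Then $t_\lambda \to \infty$ and $\lambda t_\lambda \to 0$ as $\lambda \to 0^+$. -/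
open Real Filter

theorem stmt5 (ε μ c κ : ℝ) (hε : 0 < ε) (hμ : 0 < μ) (hc : 0 < c) (hκ : 0 < κ)
    (t : ℝ → ℝ) (lam1 : ℝ) (hlam1 : 0 < lam1)
    (ht : ∀ l ∈ Set.Ioo (0:ℝ) lam1, 0 ≤ t l ∧
      ε * μ * Real.exp (-(μ * t l))
        = l ^ 2 * c * (Real.exp (l * t l) + Real.exp (-(l * t l)))
          + (κ * l - l ^ 3) * (Real.exp (l * t l) - Real.exp (-(l * t l)))) :
    Tendsto t (nhdsWithin 0 (Set.Ioi 0)) atTop ∧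
      Tendsto (fun l => l * t l) (nhdsWithin 0 (Set.Ioi 0)) (nhds 0) := by
  have hεμ : 0 < ε * μ := mul_pos hε hμ
  set δ := min lam1 (Real.sqrt κ) with hδdef
  have hδ : 0 < δ := lt_min hlam1 (Real.sqrt_pos.mpr hκ)
  have hmem : ∀ᶠ l in nhdsWithin 0 (Set.Ioi 0), l ∈ Set.Ioo (0:ℝ) δ :=
    Ioo_mem_nhdsGT_of_mem ⟨le_refl 0, hδ⟩
  -- basic facts for small l
  have hbasic : ∀ l ∈ Set.Ioo (0:ℝ) δ, 0 < l ∧ l ^ 2 ≤ κ ∧ 0 ≤ t l ∧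
      ε * μ * Real.exp (-(μ * t l))
        = l ^ 2 * c * (Real.exp (l * t l) + Real.exp (-(l * t l)))
          + (κ * l - l ^ 3) * (Real.exp (l * t l) - Real.exp (-(l * t l))) := by
    intro l hl
    obtain ⟨hl0, hlδ⟩ := hl
    have hl1 : l < lam1 := lt_of_lt_of_le hlδ (min_le_left _ _)
    have hl2 : l ^ 2 ≤ κ := by
      have : l < Real.sqrt κ := lt_of_lt_of_le hlδ (min_le_right _ _)
      have := (Real.lt_sqrt hl0.le).mp this
      linarith
    obtain ⟨h0, heq⟩ := ht l ⟨hl0, hl1⟩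
    exact ⟨hl0, hl2, h0, heq⟩
  -- key lower bound ⇒ upper bound on t
  have hub : ∀ l ∈ Set.Ioo (0:ℝ) δ, t l ≤ Real.log (ε * μ / (2 * c * l ^ 2)) / μ := by
    intro l hl
    obtain ⟨hl0, hl2, h0, heq⟩ := hbasic l hl
    set x := l * t l with hx
    have hx0 : 0 ≤ x := mul_nonneg hl0.le h0
    have hsum : 2 ≤ Real.exp x + Real.exp (-x) := by
      nlinarith [Real.add_one_le_exp x, Real.add_one_le_exp (-x)]
    have hge : 0 ≤ Real.exp x - Real.exp (-x) := by
      have : Real.exp (-x) ≤ Real.exp x := Real.exp_le_exp.mpr (by linarith)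
      linarith
    have hfac : 0 ≤ κ * l - l ^ 3 := by nlinarith
    have key1 : 2 * c * l ^ 2 ≤ ε * μ * Real.exp (-(μ * t l)) := by
      rw [heq]
      nlinarith [mul_nonneg hfac hge, mul_pos (mul_pos (pow_pos hl0 2) hc) (by linarith : (0:ℝ) < Real.exp x + Real.exp (-x))]
    have hE : 0 < Real.exp (μ * t l) := Real.exp_pos _
    have hmul : Real.exp (-(μ * t l)) * Real.exp (μ * t l) = 1 := by
      rw [← Real.exp_add]; simp
    have key2 : Real.exp (μ * t l) ≤ ε * μ / (2 * c * l ^ 2) := by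
      rw [le_div_iff₀ (by positivity)]
      have := mul_le_mul_of_nonneg_right key1 hE.le
      nlinarith
    have key3 : μ * t l ≤ Real.log (ε * μ / (2 * c * l ^ 2)) :=
      (Real.le_log_iff_exp_le (by positivity)).mpr key2
    rw [le_div_iff₀ hμ]
    linarith [key3, mul_comm μ (t l)]
  -- Part 2 : l * t l → 0
  have hA : Tendsto (fun l : ℝ => l) (nhdsWithin 0 (Set.Ioi 0)) (nhds 0) :=
    tendsto_id.mono_left nhdsWithin_le_nhds
  have hll : Tendsto (fun l : ℝ => l * Real.log l) (nhdsWithin 0 (Set.Ioi 0)) (nhds 0) := by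
    have := tendsto_log_mul_rpow_nhdsGT_zero (one_pos)
    refine this.congr' ?_
    filter_upwards [self_mem_nhdsWithin] with l (hl : 0 < l)
    rw [Real.rpow_one, mul_comm]
  have hu : Tendsto (fun l => l * (Real.log (ε * μ / (2 * c * l ^ 2)) / μ))
      (nhdsWithin 0 (Set.Ioi 0)) (nhds 0) := by
    have hT : Tendsto (fun l : ℝ => (l * Real.log (ε * μ / (2 * c)) - 2 * (l * Real.log l)) / μ)
        (nhdsWithin 0 (Set.Ioi 0)) (nhds ((0 * Real.log (ε * μ / (2 * c)) - 2 * 0) / μ)) :=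
      ((hA.mul_const _).sub (hll.const_mul 2)).div_const μ
    have h0 : (0 * Real.log (ε * μ / (2 * c)) - 2 * 0) / μ = 0 := by ring
    rw [h0] at hT
    refine hT.congr' ?_
    filter_upwards [self_mem_nhdsWithin] with l (hl : 0 < l)
    have h1 : ε * μ / (2 * c * l ^ 2) = (ε * μ / (2 * c)) / l ^ 2 := by
      rw [div_div]
    have h2 : Real.log (ε * μ / (2 * c * l ^ 2))
        = Real.log (ε * μ / (2 * c)) - 2 * Real.log l := by
      rw [h1, Real.log_div (by positivity) (by positivity), Real.log_pow]
      push_cast; ring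
    rw [h2]; ring
  have part2 : Tendsto (fun l => l * t l) (nhdsWithin 0 (Set.Ioi 0)) (nhds 0) := by
    apply squeeze_zero' (g := fun l => l * (Real.log (ε * μ / (2 * c * l ^ 2)) / μ))
    · filter_upwards [hmem] with l hl
      obtain ⟨hl0, _, h0, _⟩ := hbasic l hl
      exact mul_nonneg hl0.le h0
    · filter_upwards [hmem] with l hl
      obtain ⟨hl0, _, _, _⟩ := hbasic l hl
      have := hub l hl
      exact mul_le_mul_of_nonneg_left this hl0.le
    · exact hu
  refine ⟨?_, part2⟩
  -- Part 1 : t → ∞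
  have hlt1 : ∀ᶠ l in nhdsWithin 0 (Set.Ioi 0), l * t l ≤ 1 :=
    part2.eventually (eventually_le_nhds one_pos)
  set g : ℝ → ℝ := fun l => (6 * c * l ^ 2 + 4 * κ * (l * (l * t l))) / (ε * μ) with hg
  have hbound : ∀ᶠ l in nhdsWithin 0 (Set.Ioi 0), Real.exp (-(μ * t l)) ≤ g l := by
    filter_upwards [hmem, hlt1] with l hl hx1
    obtain ⟨hl0, hl2, h0, heq⟩ := hbasic l hl
    set x := l * t l with hx
    have hx0 : 0 ≤ x := mul_nonneg hl0.le h0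
    have hex : Real.exp x ≤ 3 := by
      have h1 : Real.exp x ≤ Real.exp 1 := Real.exp_le_exp.mpr hx1
      have := Real.exp_one_lt_d9
      linarith
    have hexn : Real.exp (-x) ≤ 1 := by
      have : Real.exp (-x) ≤ Real.exp 0 := Real.exp_le_exp.mpr (by linarith)
      simpa using this
    have hge : 0 ≤ Real.exp x - Real.exp (-x) := by
      have : Real.exp (-x) ≤ Real.exp x := Real.exp_le_exp.mpr (by linarith)
      linarith
    have hmul : Real.exp (-x) * Real.exp x = 1 := by rw [← Real.exp_add]; simp
    have hF2 : 1 - x ≤ Real.exp (-x) := by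
      have := Real.add_one_le_exp (-x); linarith
    have hF1 : (1 - x) * Real.exp x ≤ 1 := by
      calc (1 - x) * Real.exp x ≤ Real.exp (-x) * Real.exp x :=
            mul_le_mul_of_nonneg_right hF2 (Real.exp_pos x).le
        _ = 1 := hmul
    have hsinh : Real.exp x - Real.exp (-x) ≤ 4 * x := by
      have hF3 : x * Real.exp x ≤ x * 3 := mul_le_mul_of_nonneg_left hex hx0
      nlinarith
    have hbd : ε * μ * Real.exp (-(μ * t l)) ≤ 6 * c * l ^ 2 + 4 * κ * (l * x) := by
      rw [heq]
      have hA1 : l ^ 2 * c * (Real.exp x + Real.exp (-x)) ≤ l ^ 2 * c * 4 := by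
        apply mul_le_mul_of_nonneg_left (by linarith) (by positivity)
      have hA2 : (κ * l - l ^ 3) * (Real.exp x - Real.exp (-x))
          ≤ κ * l * (4 * x) := by
        calc (κ * l - l ^ 3) * (Real.exp x - Real.exp (-x))
            ≤ κ * l * (Real.exp x - Real.exp (-x)) := by
              apply mul_le_mul_of_nonneg_right (by nlinarith) hge
          _ ≤ κ * l * (4 * x) := by
              apply mul_le_mul_of_nonneg_left hsinh (by positivity)
      nlinarith
    rw [hg]
    dsimp only
    rw [le_div_iff₀ hεμ]
    calc Real.exp (-(μ * t l)) * (ε * μ) = ε * μ * Real.exp (-(μ * t l)) := by ring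
      _ ≤ 6 * c * l ^ 2 + 4 * κ * (l * x) := hbd
      _ = 6 * c * l ^ 2 + 4 * κ * (l * (l * t l)) := by rw [hx]
  have hgz : Tendsto g (nhdsWithin 0 (Set.Ioi 0)) (nhds 0) := by
    have hT : Tendsto (fun l => (6 * c * l ^ 2 + 4 * κ * (l * (l * t l))) / (ε * μ))
        (nhdsWithin 0 (Set.Ioi 0)) (nhds ((6 * c * 0 ^ 2 + 4 * κ * (0 * 0)) / (ε * μ))) :=
      ((tendsto_const_nhds.mul (hA.pow 2)).add
        (tendsto_const_nhds.mul (hA.mul part2))).div_const (ε * μ)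
    have h0 : (6 * c * 0 ^ 2 + 4 * κ * ((0:ℝ) * 0)) / (ε * μ) = 0 := by ring
    rwa [h0] at hT
  have hexp0 : Tendsto (fun l => Real.exp (-(μ * t l))) (nhdsWithin 0 (Set.Ioi 0)) (nhds 0) :=
    squeeze_zero' (Eventually.of_forall fun l => (Real.exp_pos _).le) hbound hgz
  have hbot : Tendsto (fun l => -(μ * t l)) (nhdsWithin 0 (Set.Ioi 0)) atBot :=
    Real.tendsto_exp_comp_nhds_zero.mp hexp0
  have htop : Tendsto (fun l => μ * t l) (nhdsWithin 0 (Set.Ioi 0)) atTop :=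
    tendsto_neg_atBot_iff.mp hbot
  have := htop.atTop_div_const hμ
  refine this.congr fun l => ?_
  field_simp
end

section
/- Let $c \geq 0$, $\varepsilon \in (0,1)$, $\delta = \varepsilon/(4 + 2c)$, and let $V: [\xi_0, \xi_0+1] \to \mathbb{R}$ be $C^2$ with $0 < V(\xi_0) \leq V(\xi) < 1$ for all $\xi$ and satisfying $cV' + V'' = -(1 - \varepsilon - V)V$ on $[\xi_0, \xi_0+1]$. Define $Q(\xi) = V(\xi) - \delta(\xi - \xi_0)^2 V(\xi_0)$. Then $cQ'(\xi) + Q''(\xi) + Q(\xi)(1 - Q(\xi)) \geq 0$ for all $\xi \in [\xi_0, \xi_0 + 1]$. -/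
open Real Set

lemma stmt14_aux (c ε δ s v0 v vp vpp : ℝ) (hc : 0 ≤ c) (hε0 : 0 < ε) (hε1 : ε < 1)
    (hδ4 : δ * (4 + 2 * c) = ε) (hs0 : 0 ≤ s) (hs1 : s ≤ 1)
    (hv0 : 0 < v0) (hvle : v0 ≤ v) (hvlt : v < 1)
    (hode : c * vp + vpp = -((1 - ε - v) * v)) :
    0 ≤ c * (vp - 2 * δ * s * v0) + (vpp - 2 * δ * v0) +
      (v - δ * s ^ 2 * v0) * (1 - (v - δ * s ^ 2 * v0)) := by
  have h4c : (0:ℝ) < 4 + 2 * c := by linarith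
  have hδpos : 0 < δ := by nlinarith
  have hδlt : δ < 1 := by nlinarith
  set a := δ * s ^ 2 * v0 with ha
  have key : c * (vp - 2 * δ * s * v0) + (vpp - 2 * δ * v0) + (v - a) * (1 - (v - a)) =
      ε * v + a * (2 * v - 1) - a ^ 2 - 2 * δ * v0 * (c * s + 1) := by
    linear_combination hode
  rw [key]
  have ha0 : 0 ≤ a := by rw [ha]; positivity
  have ha1 : a ≤ δ * v0 := by
    rw [ha]
    nlinarith [mul_nonneg (mul_nonneg hδpos.le hv0.le)
      (mul_nonneg (by linarith : (0:ℝ) ≤ 1 - s) (by linarith : (0:ℝ) ≤ 1 + s))]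
  have hav0 : δ * v0 < 1 := by nlinarith
  have f1 : -(δ * v0) ≤ a * (2 * v - 1) := by
    nlinarith [mul_nonneg ha0 (le_of_lt (lt_of_lt_of_le hv0 hvle))]
  have f2 : a ^ 2 ≤ δ * v0 := by
    nlinarith [mul_nonneg ha0 (by linarith : (0:ℝ) ≤ 1 - a)]
  have f3 : 2 * δ * v0 * (c * s + 1) ≤ 2 * δ * v0 * (c + 1) := by
    have hcs : c * s ≤ c := by nlinarith
    nlinarith [mul_pos hδpos hv0]
  have f4 : δ * v0 * (4 + 2 * c) = ε * v0 := by linear_combination v0 * hδ4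
  have f5 : ε * v0 ≤ ε * v := mul_le_mul_of_nonneg_left hvle hε0.le
  linarith

theorem stmt14 (c ε δ ξ0 : ℝ) (hc : 0 ≤ c) (hε : ε ∈ Set.Ioo (0:ℝ) 1)
    (hδ : δ = ε / (4 + 2 * c))
    (V V' V'' : ℝ → ℝ)
    (hd1 : ∀ ξ ∈ Set.Icc ξ0 (ξ0 + 1), HasDerivAt V (V' ξ) ξ)
    (hd2 : ∀ ξ ∈ Set.Icc ξ0 (ξ0 + 1), HasDerivAt V' (V'' ξ) ξ)
    (hbounds : ∀ ξ ∈ Set.Icc ξ0 (ξ0 + 1), 0 < V ξ0 ∧ V ξ0 ≤ V ξ ∧ V ξ < 1)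
    (hODE : ∀ ξ ∈ Set.Icc ξ0 (ξ0 + 1),
      c * V' ξ + V'' ξ = -((1 - ε - V ξ) * V ξ))
    (Q Q' Q'' : ℝ → ℝ)
    (hQ : ∀ ξ : ℝ, Q ξ = V ξ - δ * (ξ - ξ0) ^ 2 * V ξ0)
    (hQ' : ∀ ξ : ℝ, Q' ξ = V' ξ - 2 * δ * (ξ - ξ0) * V ξ0)
    (hQ'' : ∀ ξ : ℝ, Q'' ξ = V'' ξ - 2 * δ * V ξ0) :
    ∀ ξ ∈ Set.Icc ξ0 (ξ0 + 1), 0 ≤ c * Q' ξ + Q'' ξ + Q ξ * (1 - Q ξ) := by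
  intro ξ hξ
  obtain ⟨h1, h2⟩ := hξ
  obtain ⟨hv0, hvle, hvlt⟩ := hbounds ξ ⟨h1, h2⟩
  have hode := hODE ξ ⟨h1, h2⟩
  have h4c : (0:ℝ) < 4 + 2 * c := by linarith
  have hδ4 : δ * (4 + 2 * c) = ε := by rw [hδ]; field_simp
  rw [hQ, hQ', hQ'']
  exact stmt14_aux c ε δ (ξ - ξ0) (V ξ0) (V ξ) (V' ξ) (V'' ξ) hc hε.1 hε.2 hδ4
    (by linarith) (by linarith) hv0 hvle hvlt hode
end

section
/- Let $h > 1$ and let $V_\infty: \mathbb{R} \to \mathbb{R}$ be a bounded nonnegative $C^2$ solution of $V_\infty'' + V_\infty(1 - h - V_\infty) = 0$ on $\mathbb{R}$. Then $V_\infty \equiv 0$. -/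
open Real Set

/-! A nonnegative solution of `V'' = V (V + h - 1)` with `h > 1` has `V'' ≥ 0`, so it is convex.
A convex function on `ℝ` that is bounded above is constant (a secant of positive slope forces
growth to `+∞` on one side), and a constant solution `c ≥ 0` satisfies `c (1 - h - c) = 0`
with `1 - h - c < 0`, hence `c = 0`. -/

theorem ConvexOn.antitone_of_bddAbove {f : ℝ → ℝ} (hf : ConvexOn ℝ univ f)
    (hb : BddAbove (range f)) : Antitone f := by
  intro a b hab
  by_contra! hlt
  obtain ⟨M, hM⟩ := hb
  have hab' : a < b := hab.lt_of_ne (by rintro rfl; exact hlt.false)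
  set s := (f b - f a) / (b - a)
  have hs : 0 < s := div_pos (sub_pos.2 hlt) (sub_pos.2 hab')
  have hMb : 0 ≤ (M - f b) / s := div_nonneg (sub_nonneg.2 (hM ⟨b, rfl⟩)) hs.le
  set t := b + (M - f b) / s + 1
  have hbt : b < t := by linarith
  have hsecant : s * (t - b) ≤ f t - f b :=
    (le_div_iff₀ (sub_pos.2 hbt)).1 (hf.slope_mono_adjacent (mem_univ a) (mem_univ t) hab' hbt)
  have hst : s * (t - b) = M - f b + s := by
    simp only [t]
    field_simp
    ring
  linarith [hM ⟨t, rfl⟩]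

theorem ConvexOn.monotone_of_bddAbove {f : ℝ → ℝ} (hf : ConvexOn ℝ univ f)
    (hb : BddAbove (range f)) : Monotone f := by
  have hneg : ConvexOn ℝ univ (f ∘ Neg.neg) := hf.comp_linearMap (-LinearMap.id)
  have hneg_bdd : BddAbove (range (f ∘ Neg.neg)) := by
    rwa [range_comp, neg_surjective.range_eq, image_univ]
  intro a b hab
  simpa using hneg.antitone_of_bddAbove hneg_bdd (neg_le_neg hab)

theorem ConvexOn.eq_of_bddAbove {f : ℝ → ℝ} (hf : ConvexOn ℝ univ f)
    (hb : BddAbove (range f)) (x y : ℝ) : f x = f y := by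
  rcases le_total x y with hxy | hyx
  · exact le_antisymm (hf.monotone_of_bddAbove hb hxy) (hf.antitone_of_bddAbove hb hxy)
  · exact le_antisymm (hf.antitone_of_bddAbove hb hyx) (hf.monotone_of_bddAbove hb hyx)

theorem stmt15 (h : ℝ) (hh : 1 < h) (V : ℝ → ℝ)
    (hsmooth : ContDiff ℝ 2 V)
    (hbdd : ∃ M : ℝ, ∀ x : ℝ, |V x| ≤ M)
    (hnonneg : ∀ x : ℝ, 0 ≤ V x)
    (hODE : ∀ x : ℝ, deriv (deriv V) x + V x * (1 - h - V x) = 0) :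
    ∀ x : ℝ, V x = 0 := by
  have hV : Differentiable ℝ V := hsmooth.differentiable (by norm_num)
  have hV' : Differentiable ℝ (deriv V) :=
    (contDiff_succ_iff_deriv.mp hsmooth).2.2.differentiable one_ne_zero
  have hconvex : ConvexOn ℝ univ V := by
    refine convexOn_univ_of_deriv2_nonneg hV hV' fun x => ?_
    have := hODE x
    simp only [Function.iterate_succ, Function.iterate_zero, Function.comp_apply, id_eq]
    nlinarith [hnonneg x]
  have hbddAbove : BddAbove (range V) := by
    obtain ⟨M, hM⟩ := hbdd
    exact ⟨M, forall_mem_range.2 fun x => (abs_le.1 (hM x)).2⟩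
  have hconst : V = fun _ => V 0 := funext fun x => hconvex.eq_of_bddAbove hbddAbove x 0
  intro x
  have hx := hODE x
  rw [hconst] at hx ⊢
  simp only [deriv_const', deriv_const, zero_add] at hx
  nlinarith [hnonneg 0]
end
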